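/- Let d be the pseudometric on ℕ_{≥1} × ℕ_{≥1} defined by d((n,m),(n',m')) = 0 if n = n' and m = m'; 0 if n = n', min{m,m'} = 1 and max{m,m'} > n; 0 if n = n' and min{m,m'} > n; 2^{−n} if n = n' and none of the previous cases hold; and 2·∑_{k=min{n,n'}}^{max{n,n'}} k^{−2} if n ≠ n', and let X be the associated quotient metric space. Then X is bounded and X is not starry: there do not exist A > 1 and 0 < η < (A−1)/2 such that for every n ∈ ℕ the space X contains an (A_n,η)-approximate n-star for some A_n ≥ A. -/

import Mathlib

open Finset

/-- The distance function on `ℕ≥1 × ℕ≥1` from the paper: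
`d((n,m),(n',m')) = 0` if `n = n'` and `m = m'`; `0` if `n = n'`, `min{m,m'} = 1` and
`max{m,m'} > n`; `0` if `n = n'` and `min{m,m'} > n`; `2^{-n}` if `n = n'` and none of the
previous cases hold; and `2·∑_{k=min{n,n'}}^{max{n,n'}} k^{-2}` if `n ≠ n'`. -/
noncomputable def starExDist (p q : ℕ+ × ℕ+) : ℝ :=
  if p.1 = q.1 then
    if p.2 = q.2 then 0
    else if min p.2 q.2 = 1 ∧ (p.1 : ℕ) < (max p.2 q.2 : ℕ) then 0
    else if (p.1 : ℕ) < (min p.2 q.2 : ℕ) then 0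
    else (1 / 2 : ℝ) ^ (p.1 : ℕ)
  else 2 * ∑ k ∈ Finset.Icc ((min p.1 q.1 : ℕ+) : ℕ) ((max p.1 q.1 : ℕ+) : ℕ), ((k : ℝ) ^ 2)⁻¹

/-- The pseudometric space `(ℕ≥1 × ℕ≥1, starExDist)` contains an `(A,η)`-approximate
`n`-star (equivalently, its quotient metric space does). -/
def starExHasApproxStar (A η : ℝ) (n : ℕ) : Prop :=
  ∃ ρ : ℝ, 0 < ρ ∧ ∃ x : Fin (n + 1) → ℕ+ × ℕ+,
    (∀ i j : Fin (n + 1), i ≠ 0 → j ≠ 0 → i ≠ j →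
      (A - η) * ρ ≤ starExDist (x i) (x j) ∧ starExDist (x i) (x j) ≤ A * ρ) ∧
    (∀ i : Fin (n + 1), i ≠ 0 →
      ρ ≤ starExDist (x 0) (x i) ∧ starExDist (x 0) (x i) ≤ (1 + η) * ρ)

/-!
Points on one level are within `2^{-n}` of each other and the sums `∑ k⁻²` are bounded by
`ζ(2)`, so the space is bounded.

A positive distance to a point of level `n` is at least `2^{-n}`, while two points of level `n`
are at most `2^{-n}` apart. Two arms of a star on one level would thus be closer to each other
than to the centre, which `A - η > 1 + η` forbids; so the arms lie on distinct levels. For levels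
`a < l < l'` the distance `d(a,l') = d(a,l) + d(l,l') - 2l⁻²` is at least `d(a,l)/2 + d(l,l')`.
Measured from the lowest arm, the other arms are therefore pairwise `(A - η)ρ - Aρ/2 ≥ ρ/2`
apart, while all lying in an interval of width `ηρ`: there are at most `⌊2η⌋ + 2` arms.
-/

lemma Nat.sq_le_two_pow_succ (n : ℕ) : n ^ 2 ≤ 2 ^ (n + 1) := by
  induction n with
  | zero => norm_num
  | succ n ih =>
    have := Nat.lt_two_pow_self (n := n)
    rw [pow_succ 2 (n + 1)]
    nlinarith [pow_succ 2 n]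

lemma half_pow_le_two_mul_inv_sq {n : ℕ} (hn : 0 < n) :
    (1 / 2 : ℝ) ^ n ≤ 2 * ((n : ℝ) ^ 2)⁻¹ := by
  have hsq : (n : ℝ) ^ 2 ≤ 2 ^ (n + 1) := by exact_mod_cast Nat.sq_le_two_pow_succ n
  calc (1 / 2 : ℝ) ^ n = 2 * ((2 : ℝ) ^ (n + 1))⁻¹ := by
        rw [pow_succ, one_div_pow]; field_simp
    _ ≤ 2 * ((n : ℝ) ^ 2)⁻¹ := by gcongr

lemma Finset.card_le_floor_add_one_of_separated {ι : Type*} {s : Finset ι} {f : ι → ℝ}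
    {a b δ : ℝ} (hδ : 0 < δ) (hf : ∀ i ∈ s, f i ∈ Set.Icc a b)
    (hsep : ∀ i ∈ s, ∀ j ∈ s, i ≠ j → δ ≤ |f i - f j|) :
    #s ≤ ⌊(b - a) / δ⌋₊ + 1 := by
  set g : ι → ℕ := fun i => ⌊(f i - a) / δ⌋₊
  have hmaps : Set.MapsTo g s (range (⌊(b - a) / δ⌋₊ + 1)) := fun i hi =>
    mem_range.2 <| Nat.lt_succ_of_le <| Nat.floor_le_floor <|
      div_le_div_of_nonneg_right (by linarith [(hf i hi).2]) hδ.le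
  have hinj : Set.InjOn g s := by
    intro i hi j hj hij
    by_contra hne
    have hi0 : 0 ≤ (f i - a) / δ := div_nonneg (by linarith [(hf i hi).1]) hδ.le
    have hj0 : 0 ≤ (f j - a) / δ := div_nonneg (by linarith [(hf j hj).1]) hδ.le
    obtain ⟨hi1, hi2⟩ := (Nat.floor_eq_iff hi0).1 rfl
    obtain ⟨hj1, hj2⟩ := (Nat.floor_eq_iff hj0).1 hij.symm
    have hclose : |(f i - a) / δ - (f j - a) / δ| < 1 :=
      abs_sub_lt_iff.2 ⟨by linarith, by linarith⟩
    rw [← sub_div, sub_sub_sub_cancel_right, abs_div, abs_of_pos hδ, div_lt_one hδ] at hclose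
    exact (hsep i hi j hj hne).not_gt hclose
  simpa using card_le_card_of_injOn g hmaps hinj

noncomputable def invSqSum (a b : ℕ) : ℝ := ∑ k ∈ Icc a b, ((k : ℝ) ^ 2)⁻¹

lemma invSqSum_le_tsum (a b : ℕ) : invSqSum a b ≤ ∑' k : ℕ, ((k : ℝ) ^ 2)⁻¹ :=
  (Real.summable_nat_pow_inv.2 one_lt_two).sum_le_tsum _ fun _ _ => by positivity

lemma inv_sq_le_invSqSum {a b c : ℕ} (hac : a ≤ c) (hcb : c ≤ b) :
    ((c : ℝ) ^ 2)⁻¹ ≤ invSqSum a b :=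
  single_le_sum (f := fun k : ℕ => ((k : ℝ) ^ 2)⁻¹) (fun _ _ => by positivity)
    (mem_Icc.2 ⟨hac, hcb⟩)

lemma invSqSum_add_inv_sq {a b c : ℕ} (hac : a ≤ c) (hcb : c ≤ b) :
    invSqSum a b + ((c : ℝ) ^ 2)⁻¹ = invSqSum a c + invSqSum c b := by
  simp only [invSqSum, ← Ico_add_one_right_eq_Icc]
  rw [← sum_Ico_consecutive _ hac (by omega : c ≤ b + 1), sum_Ico_succ_top hac]
  ring

lemma two_mul_inv_sq_le_invSqSum {a b : ℕ} (ha : 0 < a) (hab : a < b) :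
    2 * ((b : ℝ) ^ 2)⁻¹ ≤ invSqSum a b := by
  obtain ⟨c, rfl⟩ : ∃ c, b = c + 1 := ⟨b - 1, by omega⟩
  have hc : (1 : ℝ) ≤ c := by exact_mod_cast (by omega : 1 ≤ c)
  have hpair : ((c : ℝ) ^ 2)⁻¹ + (((c + 1 : ℕ) : ℝ) ^ 2)⁻¹ ≤ invSqSum a (c + 1) := by
    rw [invSqSum, sum_Icc_succ_top (by omega), ← invSqSum]
    gcongr
    exact inv_sq_le_invSqSum (by omega) le_rfl
  have hanti : (((c + 1 : ℕ) : ℝ) ^ 2)⁻¹ ≤ ((c : ℝ) ^ 2)⁻¹ :=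
    inv_anti₀ (by positivity) (by push_cast; nlinarith)
  linarith

lemma starExDist_of_fst_ne {p q : ℕ+ × ℕ+} (h : p.1 ≠ q.1) :
    starExDist p q = 2 * invSqSum (min (p.1 : ℕ) q.1) (max (p.1 : ℕ) q.1) := by
  have hmono : Monotone ((↑) : ℕ+ → ℕ) := fun _ _ => id
  rw [starExDist, if_neg h, invSqSum, hmono.map_min, hmono.map_max]

lemma starExDist_of_fst_lt {p q : ℕ+ × ℕ+} (h : p.1 < q.1) :
    starExDist p q = 2 * invSqSum p.1 q.1 := by
  rw [starExDist_of_fst_ne h.ne, min_eq_left (PNat.coe_le_coe _ _ |>.2 h.le),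
    max_eq_right (PNat.coe_le_coe _ _ |>.2 h.le)]

lemma starExDist_eq_half_pow_of_fst_eq {p q : ℕ+ × ℕ+} (h : p.1 = q.1)
    (hpos : 0 < starExDist p q) :
    starExDist p q = (1 / 2 : ℝ) ^ (p.1 : ℕ) := by
  rw [starExDist, if_pos h] at hpos ⊢
  split_ifs at hpos ⊢ <;> first | rfl | exact absurd hpos (lt_irrefl 0)

lemma starExDist_le_half_pow_of_fst_eq {p q : ℕ+ × ℕ+} (h : p.1 = q.1) :
    starExDist p q ≤ (1 / 2 : ℝ) ^ (p.1 : ℕ) := by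
  rw [starExDist, if_pos h]
  split_ifs <;> first | exact le_rfl | positivity

lemma half_pow_le_starExDist {p q : ℕ+ × ℕ+} (hpos : 0 < starExDist p q) :
    (1 / 2 : ℝ) ^ (q.1 : ℕ) ≤ starExDist p q := by
  by_cases h : p.1 = q.1
  · rw [starExDist_eq_half_pow_of_fst_eq h hpos, h]
  · rw [starExDist_of_fst_ne h]
    calc (1 / 2 : ℝ) ^ (q.1 : ℕ) ≤ 2 * (((q.1 : ℕ) : ℝ) ^ 2)⁻¹ :=
          half_pow_le_two_mul_inv_sq q.1.pos
      _ ≤ _ := by gcongr; exact inv_sq_le_invSqSum (min_le_right _ _) (le_max_right _ _)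

lemma starExDist_le_of_fst_eq {p q r : ℕ+ × ℕ+} (h : q.1 = r.1)
    (hpos : 0 < starExDist p q) : starExDist q r ≤ starExDist p q :=
  (starExDist_le_half_pow_of_fst_eq h).trans (half_pow_le_starExDist hpos)

lemma starExDist_half_add_le {p q r : ℕ+ × ℕ+} (hpq : p.1 < q.1) (hqr : q.1 < r.1) :
    starExDist p q / 2 + starExDist q r ≤ starExDist p r := by
  rw [starExDist_of_fst_lt hpq, starExDist_of_fst_lt hqr, starExDist_of_fst_lt (hpq.trans hqr)]
  have hsplit := invSqSum_add_inv_sq (PNat.coe_le_coe _ _ |>.2 hpq.le)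
    (PNat.coe_le_coe _ _ |>.2 hqr.le)
  have hhead := two_mul_inv_sq_le_invSqSum p.1.pos (PNat.coe_lt_coe _ _ |>.2 hpq)
  linarith

lemma starExDist_bounded : ∃ M : ℝ, ∀ p q : ℕ+ × ℕ+, starExDist p q ≤ M := by
  refine ⟨max 1 (2 * ∑' k : ℕ, ((k : ℝ) ^ 2)⁻¹), fun p q => ?_⟩
  by_cases h : p.1 = q.1
  · exact (starExDist_le_half_pow_of_fst_eq h).trans
      ((pow_le_one₀ (by norm_num) (by norm_num)).trans (le_max_left _ _))
  · rw [starExDist_of_fst_ne h]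
    exact (mul_le_mul_of_nonneg_left (invSqSum_le_tsum _ _) zero_le_two).trans (le_max_right _ _)

lemma card_le_of_starExDist_mem_Icc {ι : Type*} [Fintype ι] {y : ι → ℕ+ × ℕ+}
    {A η ρ : ℝ}
    (hρ : 0 < ρ) (hA : 1 + 2 * η ≤ A) (hlev : Function.Injective fun i => (y i).1)
    (hdist : ∀ i j, i ≠ j → starExDist (y i) (y j) ∈ Set.Icc ((A - η) * ρ) (A * ρ)) :
    Fintype.card ι ≤ ⌊2 * η⌋₊ + 2 := by
  classical
  cases isEmpty_or_nonempty ι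
  · simp
  obtain ⟨i₀, hi₀⟩ := Finite.exists_min fun i => (y i).1
  have hlt : ∀ i ≠ i₀, (y i₀).1 < (y i).1 := fun i hi =>
    (hi₀ i).lt_of_ne (hlev.ne hi).symm
  have hgap : ∀ i j, i ≠ i₀ → (y i).1 < (y j).1 →
      starExDist (y i₀) (y i) + ρ / 2 ≤ starExDist (y i₀) (y j) := by
    intro i j hi hij
    have := starExDist_half_add_le (hlt i hi) hij
    have h₁ := (hdist i₀ i (Ne.symm hi)).2
    have h₂ := (hdist i j (by rintro rfl; exact hij.false)).1
    linarith [mul_le_mul_of_nonneg_right hA hρ.le]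
  have hsep : ∀ i ∈ univ.erase i₀, ∀ j ∈ univ.erase i₀, i ≠ j →
      ρ / 2 ≤ |starExDist (y i₀) (y i) - starExDist (y i₀) (y j)| := by
    intro i hi j hj hij
    rcases (hlev.ne hij).lt_or_gt with h | h
    · rw [abs_sub_comm]
      exact le_abs.2 (Or.inl (by linarith [hgap i j (ne_of_mem_erase hi) h]))
    · exact le_abs.2 (Or.inl (by linarith [hgap j i (ne_of_mem_erase hj) h]))
  have hcard := card_le_floor_add_one_of_separated (half_pos hρ)
    (fun i hi => hdist i₀ i (ne_of_mem_erase hi).symm) hsep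
  have hwidth : (A * ρ - (A - η) * ρ) / (ρ / 2) = 2 * η := by field_simp; ring
  rw [hwidth, card_erase_of_mem (mem_univ _), card_univ] at hcard
  omega

theorem starExDist_bounded_not_starry :
    (∃ M : ℝ, ∀ p q : ℕ+ × ℕ+, starExDist p q ≤ M) ∧
    ¬ ∃ A η : ℝ, 1 < A ∧ 0 < η ∧ η < (A - 1) / 2 ∧
        ∀ n : ℕ, ∃ An : ℝ, A ≤ An ∧ starExHasApproxStar An η n := by
  refine ⟨starExDist_bounded, ?_⟩
  rintro ⟨A, η, -, -, hηA, hstar⟩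
  obtain ⟨An, hAAn, ρ, hρ, x, harm, hctr⟩ := hstar (⌊2 * η⌋₊ + 3)
  have hAn : 1 + 2 * η < An := by linarith
  have hlev : Function.Injective fun i : Fin (⌊2 * η⌋₊ + 3) => (x i.succ).1 := by
    intro i j hij
    by_contra hne
    have hfar := (harm _ _ i.succ_ne_zero j.succ_ne_zero (Fin.succ_injective _ |>.ne hne)).1
    obtain ⟨hnear, hnear'⟩ := hctr _ i.succ_ne_zero
    have := starExDist_le_of_fst_eq hij (hρ.trans_le hnear)
    linarith [mul_lt_mul_of_pos_right (by linarith : 1 + η < An - η) hρ]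
  have hcard := card_le_of_starExDist_mem_Icc hρ hAn.le hlev fun i j hij =>
    harm _ _ i.succ_ne_zero j.succ_ne_zero (Fin.succ_injective _ |>.ne hij)
  rw [Fintype.card_fin] at hcard
  omega
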